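/- Let Φ be the non-selective measurement channel associated with a complete family of pairwise orthogonal projections {P_a} on ℂ^n, let ρ be a quantum state on ℂ^n, let d ≥ 1, and let p ≥ 1 be real. Then ‖ρ ⊗ E₀₀ − Φ(ρ) ⊗ (1_d/d)‖_p^p = ‖ρ − Φ(ρ)/d‖_p^p + ((d−1)/d^p) · ‖Φ(ρ)‖_p^p. -/

import Mathlib

open Matrix Kronecker
open scoped ComplexOrder

noncomputable section

variable {n : Type*} [Fintype n] [DecidableEq n]

/-- The positive semidefinite square root of a positive semidefinite matrix (removed from
Mathlib; restated with its December 2024 definition). -/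
def Matrix.PosSemidef.sqrt {𝕜 : Type*} [RCLike 𝕜] {m : Type*} [Fintype m] [DecidableEq m]
    {A : Matrix m m 𝕜} (hA : A.PosSemidef) : Matrix m m 𝕜 :=
  hA.1.eigenvectorUnitary.1 * diagonal ((↑) ∘ (√·) ∘ hA.1.eigenvalues) *
  (star hA.1.eigenvectorUnitary : Matrix m m 𝕜)

/-- `|X| = (X† X)^{1/2}`, the positive semidefinite absolute value of a matrix. -/
def matAbs (X : Matrix n n ℂ) : Matrix n n ℂ :=
  (Matrix.posSemidef_conjTranspose_mul_self X).sqrt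

/-- `Tr |X|^p`, with the `p`-th power taken through the functional calculus. -/
def traceAbsPow (p : ℝ) (X : Matrix n n ℂ) : ℝ :=
  (Matrix.trace (cfc (fun x : ℝ => x ^ p) (matAbs X))).re

/-- The Schatten `p`-norm `‖X‖_p = (Tr |X|^p)^(1/p)`. -/
def schatten (p : ℝ) (X : Matrix n n ℂ) : ℝ :=
  (traceAbsPow p X) ^ (1 / p)

/-- Matrix square root via the functional calculus (agrees with the positive semidefinite
square root on positive semidefinite matrices). -/
def msqrt (X : Matrix n n ℂ) : Matrix n n ℂ := cfc Real.sqrt X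

/-- Matrix natural logarithm via the functional calculus. -/
def mlog (X : Matrix n n ℂ) : Matrix n n ℂ := cfc Real.log X

/-- Von Neumann entropy `S(ρ) = -Tr(ρ log ρ)`. -/
def vnEntropy (ρ : Matrix n n ℂ) : ℝ := -(Matrix.trace (ρ * mlog ρ)).re

/-- Relative entropy `S(ρ‖σ) = Tr(ρ log ρ) - Tr(ρ log σ)`. -/
def relEnt (ρ σ : Matrix n n ℂ) : ℝ :=
  (Matrix.trace (ρ * mlog ρ)).re - (Matrix.trace (ρ * mlog σ)).re

/-- Uhlmann fidelity `F(ρ,σ) = (Tr|√σ √ρ|)²`. -/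
def fidelity (ρ σ : Matrix n n ℂ) : ℝ :=
  ((Matrix.trace (matAbs (msqrt σ * msqrt ρ))).re) ^ 2

/-- Partial trace over the second factor. -/
def ptraceE {S E : Type*} [Fintype E] (Ω : Matrix (S × E) (S × E) ℂ) : Matrix S S ℂ :=
  Matrix.of fun s s' => ∑ e, Ω (s, e) (s', e)

/-- Partial trace over the first factor. -/
def ptraceS {S E : Type*} [Fintype S] (Ω : Matrix (S × E) (S × E) ℂ) : Matrix E E ℂ :=
  Matrix.of fun e e' => ∑ s, Ω (s, e) (s, e')

/-! `ρ ⊗ E₀₀ - Φ(ρ) ⊗ 1/d` is block diagonal along the second tensor factor: its block at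
index `0` is `ρ - Φ(ρ)/d` and its other `d - 1` blocks are `-Φ(ρ)/d`. For Hermitian `X`,
`Tr |X|^p` is the sum of `|λ|^p` over the eigenvalues `λ` of `X`, so it is additive over the
blocks of a block-diagonal matrix and scales by `|c|^p` under `X ↦ c • X`. -/

open Polynomial Finset Unitary

lemma Matrix.blockDiagonal_mem_unitary {m o α : Type*} [Fintype m] [DecidableEq m] [Fintype o]
    [DecidableEq o] [Semiring α] [StarRing α] {U : o → Matrix m m α}
    (hU : ∀ k, U k ∈ unitary (Matrix m m α)) :
    blockDiagonal U ∈ unitary (Matrix (m × o) (m × o) α) := by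
  simp only [Unitary.mem_iff, star_eq_conjTranspose, blockDiagonal_conjTranspose,
    ← blockDiagonal_mul]
  simp only [← star_eq_conjTranspose, Unitary.star_mul_self_of_mem (hU _),
    Unitary.mul_star_self_of_mem (hU _)]
  exact ⟨blockDiagonal_one, blockDiagonal_one⟩

lemma Matrix.kronecker_single_sub_kronecker_smul_one {m k α : Type*} [DecidableEq m]
    [DecidableEq k] [CommRing α] (A B : Matrix m m α) (z : k) (c : α) :
    A ⊗ₖ single z z 1 - B ⊗ₖ (c • 1) =
      blockDiagonal fun j => if j = z then A - c • B else -(c • B) := by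
  ext ⟨i, j⟩ ⟨i', j'⟩
  rcases eq_or_ne j j' with rfl | hj
  · rcases eq_or_ne j z with rfl | hz
    · simp [mul_comm]
    · simp [hz, hz.symm, mul_comm]
  · have hz : ¬(z = j ∧ z = j') := fun h => hj (h.1 ▸ h.2)
    simp [blockDiagonal_apply, hj, hz]

lemma Fintype.sum_ite_eq_add_card_sub_one_mul {k R : Type*} [Fintype k] [DecidableEq k] [Ring R]
    (z : k) (x y : R) : ∑ j, (if j = z then x else y) = x + ((Fintype.card k : R) - 1) * y := by
  rw [Fintype.sum_eq_add_sum_compl z, if_pos rfl,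
    Finset.sum_congr rfl fun j hj => if_neg (mem_compl.mp hj ∘ mem_singleton.mpr), sum_const,
    card_compl, card_singleton, nsmul_eq_mul, Nat.cast_pred (Fintype.card_pos_iff.mpr ⟨z⟩)]

section CFC

variable {𝕜 m : Type*} [RCLike 𝕜] [Fintype m] [DecidableEq m]

lemma Matrix.continuousOn_real_spectrum (A : Matrix m m 𝕜) (f : ℝ → ℝ) :
    ContinuousOn f (spectrum ℝ A) := by
  rw [continuousOn_iff_continuous_domRestrict]; fun_prop

lemma Matrix.spectrum_real_diagonal (v : m → ℝ) :
    spectrum ℝ (diagonal ((↑) ∘ v : m → 𝕜)) = Set.range v := by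
  ext x
  rw [← spectrum.algebraMap_mem_iff 𝕜, spectrum_diagonal]
  simp [RCLike.algebraMap_eq_ofReal]

lemma Matrix.cfc_diagonal (v : m → ℝ) (f : ℝ → ℝ) :
    cfc f (diagonal ((↑) ∘ v : m → 𝕜)) = diagonal ((↑) ∘ f ∘ v) := by
  have hD : IsSelfAdjoint (diagonal ((↑) ∘ v : m → 𝕜)) := by
    simp [IsSelfAdjoint, star_eq_conjTranspose, diagonal_conjTranspose, Pi.star_def]
  -- on the finite spectrum, `f` agrees with its Lagrange interpolation polynomial
  set q : ℝ[X] := Lagrange.interpolate (univ.image v) id f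
  have hq : ∀ i, q.eval (v i) = f (v i) := fun i =>
    Lagrange.eval_interpolate_at_node f (Set.injOn_id _) (mem_image_of_mem v (mem_univ i))
  rw [cfc_congr (g := q.eval), cfc_polynomial q _ hD]
  · rw [show diagonal ((↑) ∘ v : m → 𝕜) = diagonalAlgHom ℝ ((↑) ∘ v) from rfl,
      aeval_algHom_apply, aeval_pi_apply]
    change diagonal _ = diagonal _
    congr 1 with i
    simpa [hq] using aeval_ofReal (K := 𝕜) q (v i)
  · rintro x hx
    obtain ⟨i, rfl⟩ := spectrum_real_diagonal (𝕜 := 𝕜) v ▸ hx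
    exact (hq i).symm

lemma Matrix.cfc_conjStarAlgAut (u : unitary (Matrix m m 𝕜)) {A : Matrix m m 𝕜}
    (hA : A.IsHermitian) (f : ℝ → ℝ) :
    cfc f (conjStarAlgAut 𝕜 _ u A) = conjStarAlgAut 𝕜 _ u (cfc f A) :=
  (StarAlgHomClass.map_cfc (conjStarAlgAut 𝕜 _ u) f A (A.continuousOn_real_spectrum f)
    (by change Continuous fun X : Matrix m m 𝕜 => u * X * star u; fun_prop) hA
    (isHermitian_mul_mul_conjTranspose (u : Matrix m m 𝕜) hA)).symm

lemma Matrix.cfc_conjStarAlgAut_diagonal (u : unitary (Matrix m m 𝕜)) (v : m → ℝ) (f : ℝ → ℝ) :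
    cfc f (conjStarAlgAut 𝕜 _ u (diagonal ((↑) ∘ v))) =
      conjStarAlgAut 𝕜 _ u (diagonal ((↑) ∘ f ∘ v)) := by
  rw [cfc_conjStarAlgAut u (isHermitian_diagonal_of_self_adjoint _ ?_), cfc_diagonal]
  ext i
  simp

lemma Matrix.trace_conjStarAlgAut (u : unitary (Matrix m m 𝕜)) (A : Matrix m m 𝕜) :
    (conjStarAlgAut 𝕜 _ u A).trace = A.trace := by
  rw [conjStarAlgAut_apply, trace_mul_cycle, coe_star_mul_self, one_mul]

end CFC

section Schatten

variable {m : Type*} [Fintype m] [DecidableEq m]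

lemma matAbs_eq_cfc_sqrt (X : Matrix m m ℂ) : matAbs X = cfc Real.sqrt (Xᴴ * X) := by
  rw [(posSemidef_conjTranspose_mul_self X).1.cfc_eq]
  rfl

lemma traceAbsPow_eq_sum_of_matAbs_eq {X : Matrix m m ℂ} (u : unitary (Matrix m m ℂ))
    (w : m → ℝ) (h : matAbs X = conjStarAlgAut ℂ _ u (diagonal (RCLike.ofReal ∘ w))) (p : ℝ) :
    traceAbsPow p X = ∑ i, w i ^ p := by
  rw [traceAbsPow, h, cfc_conjStarAlgAut_diagonal, trace_conjStarAlgAut, trace_diagonal]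
  simp [← Complex.ofReal_sum]

lemma traceAbsPow_nonneg (p : ℝ) (X : Matrix m m ℂ) : 0 ≤ traceAbsPow p X := by
  have hH := (posSemidef_conjTranspose_mul_self X).1
  rw [traceAbsPow_eq_sum_of_matAbs_eq hH.eigenvectorUnitary (fun i => √(hH.eigenvalues i)) rfl]
  positivity

lemma schatten_rpow {p : ℝ} (hp : p ≠ 0) (X : Matrix m m ℂ) :
    schatten p X ^ p = traceAbsPow p X := by
  rw [schatten, ← Real.rpow_mul (traceAbsPow_nonneg p X), one_div_mul_cancel hp, Real.rpow_one]

lemma traceAbsPow_conjStarAlgAut_diagonal (u : unitary (Matrix m m ℂ)) (v : m → ℝ) (p : ℝ) :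
    traceAbsPow p (conjStarAlgAut ℂ _ u (diagonal (RCLike.ofReal ∘ v))) = ∑ i, |v i| ^ p := by
  refine traceAbsPow_eq_sum_of_matAbs_eq u _ ?_ p
  have hsq : (conjStarAlgAut ℂ _ u (diagonal (RCLike.ofReal ∘ v)))ᴴ *
      conjStarAlgAut ℂ _ u (diagonal (RCLike.ofReal ∘ v)) =
        conjStarAlgAut ℂ _ u (diagonal (RCLike.ofReal ∘ fun i => v i ^ 2)) := by
    rw [← star_eq_conjTranspose, ← map_star, ← map_mul, star_eq_conjTranspose,
      diagonal_conjTranspose, diagonal_mul_diagonal]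
    congr 2 with i
    simp [sq]
  rw [matAbs_eq_cfc_sqrt, hsq, cfc_conjStarAlgAut_diagonal]
  congr 3 with i
  simp [Real.sqrt_sq_eq_abs]

lemma Matrix.IsHermitian.traceAbsPow_eq_sum_eigenvalues {X : Matrix m m ℂ} (hX : X.IsHermitian)
    (p : ℝ) : traceAbsPow p X = ∑ i, |hX.eigenvalues i| ^ p := by
  conv_lhs => rw [hX.spectral_theorem]
  exact traceAbsPow_conjStarAlgAut_diagonal _ _ p

lemma Matrix.IsHermitian.traceAbsPow_real_smul {X : Matrix m m ℂ} (hX : X.IsHermitian) (c : ℝ)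
    (p : ℝ) : traceAbsPow p ((c : ℂ) • X) = |c| ^ p * traceAbsPow p X := by
  have hcX : (c : ℂ) • X = conjStarAlgAut ℂ _ hX.eigenvectorUnitary
      (diagonal (RCLike.ofReal ∘ fun i => c * hX.eigenvalues i)) := by
    conv_lhs => rw [hX.spectral_theorem]
    rw [← map_smul, ← diagonal_smul]
    congr 2 with i
    simp
  rw [hcX, traceAbsPow_conjStarAlgAut_diagonal, hX.traceAbsPow_eq_sum_eigenvalues, mul_sum]
  simp [abs_mul, Real.mul_rpow]

lemma traceAbsPow_blockDiagonal {o : Type*} [Fintype o] [DecidableEq o] {M : o → Matrix m m ℂ}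
    (hM : ∀ k, (M k).IsHermitian) (p : ℝ) :
    traceAbsPow p (blockDiagonal M) = ∑ k, traceAbsPow p (M k) := by
  let U : unitary (Matrix (m × o) (m × o) ℂ) :=
    ⟨blockDiagonal fun k => (hM k).eigenvectorUnitary,
      blockDiagonal_mem_unitary fun k => (hM k).eigenvectorUnitary.2⟩
  have hMU : blockDiagonal M =
      conjStarAlgAut ℂ _ U (diagonal (RCLike.ofReal ∘ fun ik => (hM ik.2).eigenvalues ik.1)) := by
    have hD : (diagonal (RCLike.ofReal ∘ fun ik : m × o => (hM ik.2).eigenvalues ik.1) :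
        Matrix (m × o) (m × o) ℂ) =
          blockDiagonal fun k => diagonal (RCLike.ofReal ∘ (hM k).eigenvalues) :=
      (blockDiagonal_diagonal fun k i => ((hM k).eigenvalues i : ℂ)).symm
    conv_lhs => enter [1, k]; rw [(hM k).spectral_theorem, conjStarAlgAut_apply]
    rw [hD, conjStarAlgAut_apply, blockDiagonal_mul, blockDiagonal_mul]
    simp [U, star_eq_conjTranspose, blockDiagonal_conjTranspose]
  rw [hMU, traceAbsPow_conjStarAlgAut_diagonal, Fintype.sum_prod_type_right]
  simp_rw [(hM _).traceAbsPow_eq_sum_eigenvalues]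

end Schatten

theorem schatten_pow_kron_e00_sub_measured_mixed_general
    {n ι : Type*} [Fintype n] [DecidableEq n] [Fintype ι]
    (P : ι → Matrix n n ℂ)
    (hherm : ∀ a, (P a)ᴴ = P a)
    (ρ : Matrix n n ℂ) (hρ : ρ.PosSemidef)
    (d : ℕ) (hd : 1 ≤ d) (p : ℝ) (hp : 1 ≤ p) :
    schatten p (ρ ⊗ₖ Matrix.single (⟨0, hd⟩ : Fin d) ⟨0, hd⟩ (1 : ℂ)
        - (∑ a, P a * ρ * P a) ⊗ₖ ((d : ℂ)⁻¹ • (1 : Matrix (Fin d) (Fin d) ℂ))) ^ p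
      = schatten p (ρ - (d : ℂ)⁻¹ • ∑ a, P a * ρ * P a) ^ p
        + ((d : ℝ) - 1) / (d : ℝ) ^ p * schatten p (∑ a, P a * ρ * P a) ^ p := by
  set σ := ∑ a, P a * ρ * P a
  have hσ : σ.IsHermitian := isSelfAdjoint_sum _ fun a _ => by
    have := isHermitian_mul_mul_conjTranspose (P a) hρ.1
    rwa [hherm a] at this
  have hdσ : ((d : ℂ)⁻¹ • σ).IsHermitian := hσ.smul (by simp [IsSelfAdjoint])
  have hblocks : ∀ j : Fin d,
      (if j = ⟨0, hd⟩ then ρ - (d : ℂ)⁻¹ • σ else -((d : ℂ)⁻¹ • σ)).IsHermitian := fun j => by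
    split_ifs
    exacts [hρ.1.sub hdσ, hdσ.neg]
  have hp0 : p ≠ 0 := (one_pos.trans_le hp).ne'
  rw [kronecker_single_sub_kronecker_smul_one, schatten_rpow hp0, schatten_rpow hp0,
    schatten_rpow hp0, traceAbsPow_blockDiagonal hblocks]
  simp only [apply_ite (traceAbsPow p)]
  have hneg : -((d : ℂ)⁻¹ • σ) = ((-(d : ℝ)⁻¹ : ℝ) : ℂ) • σ := by push_cast; rw [neg_smul]
  rw [Fintype.sum_ite_eq_add_card_sub_one_mul, Fintype.card_fin, hneg,
    hσ.traceAbsPow_real_smul, abs_neg, abs_inv, Nat.abs_cast, Real.inv_rpow (Nat.cast_nonneg d)]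
  ring

/-- `‖ρ ⊗ E₀₀ - Φ(ρ) ⊗ 1_d/d‖_p^p = ‖ρ - Φ(ρ)/d‖_p^p + ((d-1)/d^p) ‖Φ(ρ)‖_p^p`. -/
theorem schatten_pow_kron_e00_sub_measured_mixed
    {n ι : Type*} [Fintype n] [DecidableEq n] [Fintype ι]
    (P : ι → Matrix n n ℂ)
    (hproj : ∀ a, P a * P a = P a)
    (hherm : ∀ a, (P a)ᴴ = P a)
    (horth : ∀ a b, a ≠ b → P a * P b = 0)
    (hsum : ∑ a, P a = 1)
    (ρ : Matrix n n ℂ) (hρ : ρ.PosSemidef) (htr : ρ.trace = 1)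
    (d : ℕ) (hd : 1 ≤ d) (p : ℝ) (hp : 1 ≤ p) :
    schatten p (ρ ⊗ₖ Matrix.single (⟨0, hd⟩ : Fin d) ⟨0, hd⟩ (1 : ℂ)
        - (∑ a, P a * ρ * P a) ⊗ₖ ((d : ℂ)⁻¹ • (1 : Matrix (Fin d) (Fin d) ℂ))) ^ p
      = schatten p (ρ - (d : ℂ)⁻¹ • ∑ a, P a * ρ * P a) ^ p
        + ((d : ℝ) - 1) / (d : ℝ) ^ p * schatten p (∑ a, P a * ρ * P a) ^ p :=
  schatten_pow_kron_e00_sub_measured_mixed_general P hherm ρ hρ d hd p hp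

end
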